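/- For every real x ≥ 0 and every integer n ≥ 1, (e^{-nx}/2)·Σ_{k₁,k₂≥0, k₁+k₂≥1} ((k₁+k₂)·(nx/2)^{k₁+k₂-1}/(k₁!·k₂!))·((k₁+k₂)/n)² = x² + 3x/n + 1/n²; that is, G_n(e₂;x) = x² + 3x/n + 1/n² for the operator attached to the multiple Sheffer polynomials (k₁+k₂)·x^{k₁+k₂-1}. -/

import Mathlib

/-!
Summing the double series along the antidiagonals `k₁ + k₂ = m` and using
`∑_{k₁+k₂=m} 1/(k₁! k₂!) = 2^m/m!` turns `G_n(e₂; x)` into `e^{-y}/n² · ∑_m m³ y^{m-1}/m!`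
with `y = n x`. Expanding `(j+1)² = j(j-1) + 3j + 1` in falling factorials, whose exponential
series sum to `y^k e^y`, gives `∑_m m³ y^{m-1}/m! = (y² + 3y + 1) e^y`.
-/

open Finset Nat

lemma Real.hasSum_pow_div_factorial (y : ℝ) : HasSum (fun j : ℕ => y ^ j / j !) (Real.exp y) :=
  Real.exp_eq_exp_ℝ ▸ NormedSpace.expSeries_div_hasSum_exp y

lemma Real.hasSum_descFactorial_mul_pow_div_factorial (y : ℝ) (k : ℕ) :
    HasSum (fun j : ℕ => (j.descFactorial k : ℝ) * y ^ j / j !) (y ^ k * Real.exp y) := by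
  rw [← (add_left_injective k).hasSum_iff]
  · convert! (Real.hasSum_pow_div_factorial y).mul_left (y ^ k) using 1
    ext i
    have hfac : (i ! : ℝ) * (i + k).descFactorial k = (i + k)! := by
      exact_mod_cast Nat.add_sub_cancel i k ▸ factorial_mul_descFactorial (Nat.le_add_left k i)
    rw [Function.comp_apply, ← hfac, pow_add]
    field_simp
  · rintro j hj
    have hjk : j < k := by
      by_contra! h
      exact hj ⟨j - k, Nat.sub_add_cancel h⟩
    simp [descFactorial_eq_zero_iff_lt.mpr hjk]

lemma Real.hasSum_add_one_sq_mul_pow_div_factorial (y : ℝ) :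
    HasSum (fun j : ℕ => ((j : ℝ) + 1) ^ 2 * y ^ j / j !) ((y ^ 2 + 3 * y + 1) * Real.exp y) := by
  have hsplit (j : ℕ) : ((j : ℝ) + 1) ^ 2 =
      j.descFactorial 2 + 3 * j.descFactorial 1 + j.descFactorial 0 := by
    cases j <;> simp [descFactorial_succ]; ring
  have := ((Real.hasSum_descFactorial_mul_pow_div_factorial y 2).add
    ((Real.hasSum_descFactorial_mul_pow_div_factorial y 1).mul_left 3)).add
    (Real.hasSum_descFactorial_mul_pow_div_factorial y 0)
  convert! this using 1
  · ext j; rw [hsplit]; ring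
  · ring

lemma Real.hasSum_cube_mul_pow_pred_div_factorial (y : ℝ) :
    HasSum (fun m : ℕ => (m : ℝ) ^ 3 * y ^ (m - 1) / m !) ((y ^ 2 + 3 * y + 1) * Real.exp y) := by
  rw [← hasSum_nat_add_iff' 1]
  convert! Real.hasSum_add_one_sq_mul_pow_div_factorial y using 1
  · ext j; push_cast [factorial_succ]; field_simp
  · simp

lemma Finset.Nat.sum_antidiagonal_inv_factorial_mul_factorial (m : ℕ) :
    ∑ p ∈ antidiagonal m, ((p.1 ! * p.2 ! : ℝ))⁻¹ = 2 ^ m / m ! := by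
  have hchoose (p : ℕ × ℕ) (hp : p ∈ antidiagonal m) :
      ((p.1 ! * p.2 ! : ℝ))⁻¹ = (m.choose p.1 : ℝ) / m ! := by
    rw [← mem_antidiagonal.mp hp, Nat.cast_add_choose]
    field_simp
  rw [sum_congr rfl hchoose, ← sum_div, Nat.sum_antidiagonal_eq_sum_range_succ_mk]
  exact_mod_cast congrArg (fun s : ℕ => (s : ℝ) / m !) (Nat.sum_range_choose m)

lemma hasSum_prod_div_factorial_of_hasSum {h : ℕ → ℝ} (h0 : ∀ m, 0 ≤ h m) {s : ℝ}
    (hs : HasSum (fun m => h m * 2 ^ m / m !) s) :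
    HasSum (fun k : ℕ × ℕ => h (k.1 + k.2) / (k.1 ! * k.2 !)) s := by
  rw [← HasAntidiagonal.sigmaAntidiagonalEquivProd.hasSum_iff]
  have hfiber (m : ℕ) : HasSum (fun p : antidiagonal m => h (p.1.1 + p.1.2) / (p.1.1 ! * p.1.2 !))
      (h m * 2 ^ m / m !) := by
    convert! hasSum_fintype _ using 1
    rw [sum_coe_sort (antidiagonal m) (fun p => h (p.1 + p.2) / (p.1 ! * p.2 !)),
      mul_div_assoc, ← Finset.Nat.sum_antidiagonal_inv_factorial_mul_factorial, mul_sum]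
    refine sum_congr rfl fun p hp => ?_
    rw [mem_antidiagonal.mp hp, div_eq_mul_inv]
  refine hs.sigma_of_hasSum hfiber ?_
  refine (summable_sigma_of_nonneg fun p => div_nonneg (h0 _) (by positivity)).mpr
    ⟨fun m => (hfiber m).summable, ?_⟩
  convert! hs.summable using 1
  ext m
  exact (hfiber m).tsum_eq

/-- `G_n(e₂;x) = x² + 3x/n + 1/n²` for the operator attached to the
multiple Sheffer polynomials `(k₁+k₂)·x^{k₁+k₂−1}`. -/
theorem Gkxk_e2 (x : ℝ) (hx : 0 ≤ x) (n : ℕ) (hn : 1 ≤ n) :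
    Real.exp (-(n * x)) / 2 *
        ∑' k : ℕ × ℕ,
          (k.1 + k.2 : ℝ) * (n * x / 2) ^ (k.1 + k.2 - 1) /
            (k.1.factorial * k.2.factorial) * ((k.1 + k.2 : ℝ) / n) ^ 2 =
      x ^ 2 + 3 * x / n + 1 / (n : ℝ) ^ 2 := by
  set y : ℝ := n * x
  have hn0 : (n : ℝ) ≠ 0 := by positivity
  have hweight (m : ℕ) : (m : ℝ) * (y / 2) ^ (m - 1) * (m / n) ^ 2 * 2 ^ m / m ! =
      2 / n ^ 2 * ((m : ℝ) ^ 3 * y ^ (m - 1) / m !) := by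
    cases m with
    | zero => simp
    | succ j => rw [Nat.add_sub_cancel, pow_succ 2, div_pow]; field_simp
  have hsum := hasSum_prod_div_factorial_of_hasSum
    (h := fun m => (m : ℝ) * (y / 2) ^ (m - 1) * (m / n) ^ 2) (fun m => by positivity)
    (s := 2 / n ^ 2 * ((y ^ 2 + 3 * y + 1) * Real.exp y))
    (by simpa only [hweight] using (Real.hasSum_cube_mul_pow_pred_div_factorial y).mul_left _)
  push_cast at hsum
  rw [tsum_congr fun k => div_mul_eq_mul_div .., hsum.tsum_eq, Real.exp_neg]
  field_simp
  ring
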